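/- Let p ≥ 1, d > 0 real, and β, γ ∈ ℝ^p, and let (R_s)_{s∈{0,1}^{2p+1}} be defined by the R-recursion in the context. Then for every bitstring s ∈ {0,1}^{2p+1}: R_{F(s)} = R_s and R_{s̄} = R_s, where F is the partial flip and s̄ denotes the bitstring obtained by flipping every bit of s. -/

import Mathlib

open Complex Finset

namespace QAOA

abbrev BS (p : ℕ) := Fin (2*p+1) → ZMod 2

def bit (p : ℕ) (s : BS p) (j : ℕ) : ZMod 2 := s ⟨j % (2*p+1), Nat.mod_lt _ (by omega)⟩

/-- Level of symmetry. -/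
def L (p : ℕ) (s : BS p) : ℕ :=
  Nat.findGreatest (fun j => ∀ k ≤ j, bit p s (p + k) = bit p s (p - k)) p

/-- Partial flip. -/
def pflip (p : ℕ) (s : BS p) : BS p :=
  fun j => if p - L p s ≤ (j : ℕ) ∧ (j : ℕ) ≤ p + L p s then s j + 1 else s j

def IsOdd (p : ℕ) (s : BS p) : Prop := bit p s 0 ≠ bit p s p

instance (p : ℕ) : DecidablePred (IsOdd p) := fun s => by unfold IsOdd; infer_instance

/-- (−1)^{1[s odd]} as a complex number. -/
noncomputable def sgn (p : ℕ) (s : BS p) : ℂ := if IsOdd p s then -1 else 1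

/-- (−1)^b for a bit b. -/
noncomputable def sgnR (b : ZMod 2) : ℝ := if b = 0 then 1 else -1

noncomputable def B (p : ℕ) (β : Fin p → ℝ) (s : BS p) : ℂ :=
  ∏ j : Fin p,
    ((Real.cos (β j / 2) : ℂ) ^
      ((if bit p s (j : ℕ) = bit p s ((j : ℕ) + 1) then 1 else 0) +
       (if bit p s (2*p - (j : ℕ)) = bit p s (2*p - (j : ℕ) - 1) then 1 else 0)) *
     (Complex.I * (Real.sin (β j / 2) : ℂ)) ^
      ((if bit p s (j : ℕ) ≠ bit p s ((j : ℕ) + 1) then 1 else 0) +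
       (if bit p s (2*p - (j : ℕ)) ≠ bit p s (2*p - (j : ℕ) - 1) then 1 else 0)))

noncomputable def phi (p : ℕ) (γ : Fin p → ℝ) (s : BS p) : ℝ :=
  ∑ j : Fin p, γ j / 2 * (sgnR (bit p s (2*p - (j : ℕ))) - sgnR (bit p s (j : ℕ)))


/-! QAOA machinery. -/

/-- Computational basis states on `n` qubits. -/
abbrev Q (n : ℕ) := Fin n → ZMod 2

/-- Pauli `X` on qubit `k`: entry `(x, y)` is `1` iff `y` equals `x` with bit `k` flipped. -/
def PauliX (n : ℕ) (k : Fin n) : Matrix (Q n) (Q n) ℂ :=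
  fun x y => if y = Function.update x k (x k + 1) then 1 else 0

/-- The mixer Hamiltonian `H_B = ∑ₖ Xₖ`. -/
noncomputable def HB (n : ℕ) : Matrix (Q n) (Q n) ℂ := ∑ k : Fin n, PauliX n k

/-- The state `|+⟩` with all entries `2^{-n/2}`. -/
noncomputable def plusState (n : ℕ) : Q n → ℂ := fun _ => (((2 : ℝ) ^ (-(n : ℝ) / 2) : ℝ) : ℂ)

/-- The level-`p` QAOA state
`e^{−iβ_{p−1}H_B/2} e^{−iγ_{p−1}H_C/2} ⋯ e^{−iβ_0 H_B/2} e^{−iγ_0 H_C/2} |+⟩`. -/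
noncomputable def qaoaState (n p : ℕ) (Hc : Matrix (Q n) (Q n) ℂ) (β γ : Fin p → ℝ) : Q n → ℂ :=
  ((List.ofFn (fun j : Fin p =>
      NormedSpace.exp ((-(Complex.I * ((β j : ℂ) / 2))) • HB n) *
      NormedSpace.exp ((-(Complex.I * ((γ j : ℂ) / 2))) • Hc))).reverse.prod).mulVec
    (plusState n)

/-- The energy `⟨ψ|H_C|ψ⟩`. -/
noncomputable def energy (n : ℕ) (Hc : Matrix (Q n) (Q n) ℂ) (ψ : Q n → ℂ) : ℂ :=
  ∑ x, (starRingEnd ℂ) (ψ x) * Hc.mulVec ψ x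

/-- `D`-element subsets of `{0, …, n−1}`. -/
abbrev DSub (n D : ℕ) := {S : Finset (Fin n) // S.card = D}

/-- `D`-spin problem Hamiltonian: diagonal with entry `∑_S J_S ∏_{k ∈ S} (−1)^{x_k}`. -/
noncomputable def HCspin (n D : ℕ) (J : DSub n D → ℝ) : Matrix (Q n) (Q n) ℂ :=
  Matrix.diagonal (fun x => ((∑ S : DSub n D, J S * ∏ k ∈ S.1, sgnR (x k) : ℝ) : ℂ))

/-- All tuples of nonnegative integers indexed by `κ` summing to `D`. -/
def tuples (κ : Type*) [Fintype κ] [DecidableEq κ] (D : ℕ) : Finset (κ → ℕ) :=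
  (Fintype.piFinset (fun _ : κ => Finset.range (D + 1))).filter (fun g => ∑ s, g s = D)

/-- Ordered pairs `k < l`, representing the 2-element subsets of `{0, …, n−1}`. -/
abbrev Pair (n : ℕ) := {e : Fin n × Fin n // e.1 < e.2}

/-- MaxCut-type problem Hamiltonian: diagonal with entry `∑_{k<l} J_{kl} (−1)^{x_k}(−1)^{x_l}`. -/
noncomputable def HCpair (n : ℕ) (J : Pair n → ℝ) : Matrix (Q n) (Q n) ℂ :=
  Matrix.diagonal (fun x => ((∑ e : Pair n, J e * sgnR (x e.1.1) * sgnR (x e.1.2) : ℝ) : ℂ))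

/-- The quantities `R_s`, defined by downward recursion on the level of symmetry:
for `L(s) ∈ {p−1, p}` (where the second factor is `1`),
`R_s = exp(−d(1 − (1/2)∑_{t : L(t)=p} (−1)^{1[t odd]} B_{β,t} e^{iφ(γ, s⊕t)}))`,
and for `L(s) ≤ p−2` there is the extra factor
`exp((d/2) ∑_{t : L(s)<L(t)<p} (−1)^{1[t odd]} B_{β,t} R_t e^{iφ(γ, s⊕t)})`. -/
noncomputable def Rrec (p : ℕ) (d : ℝ) (β γ : Fin p → ℝ) : BS p → ℂ
  | s =>
    Complex.exp (-(d : ℂ) * (1 - (1/2 : ℂ) *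
        ∑ t ∈ Finset.univ.filter (fun t : BS p => L p t = p),
          sgn p t * B p β t * Complex.exp (Complex.I * (phi p γ (s + t) : ℝ)))) *
    (if L p s + 2 ≤ p then
      Complex.exp (((d : ℂ) / 2) *
        ∑ t ∈ (Finset.univ.filter (fun t : BS p => L p s < L p t ∧ L p t < p)).attach,
          sgn p t.1 * B p β t.1 * Rrec p d β γ t.1 *
            Complex.exp (Complex.I * (phi p γ (s + t.1) : ℝ)))
      else 1)
  termination_by s => p - L p s
  decreasing_by
    have ht := (Finset.mem_filter.mp t.2).2
    show p - L p t.1 < p - L p s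
    omega


set_option maxHeartbeats 1000000

/-! Auxiliary lemmas for stmt_13. -/

section Aux

variable {p : ℕ}

private lemma findGreatest_congr' {P Q : ℕ → Prop} [DecidablePred P] [DecidablePred Q]
    (h : ∀ n, P n ↔ Q n) (n : ℕ) : Nat.findGreatest P n = Nat.findGreatest Q n :=
  le_antisymm (Nat.findGreatest_mono_left (fun n => (h n).mp) n)
    (Nat.findGreatest_mono_left (fun n => (h n).mpr) n)

lemma bit_add' (u v : BS p) (m : ℕ) : bit p (u + v) m = bit p u m + bit p v m := rfl

/-- Flip every bit. -/
def flipA (s : BS p) : BS p := fun j => s j + 1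

lemma bit_flipA (s : BS p) (m : ℕ) : bit p (flipA s) m = bit p s m + 1 := rfl

lemma flipA_add_flipA (s t : BS p) : flipA s + flipA t = s + t := by
  funext j
  show s j + 1 + (t j + 1) = s j + t j
  have h : (1 : ZMod 2) + 1 = 0 := rfl
  rw [add_add_add_comm, h, add_zero]

lemma flipA_flipA (s : BS p) : flipA (flipA s) = s := by
  funext j
  show s j + 1 + 1 = s j
  have h : (1 : ZMod 2) + 1 = 0 := rfl
  rw [add_assoc, h, add_zero]

lemma L_le' (s : BS p) : L p s ≤ p := Nat.findGreatest_le p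

lemma Psym_L (s : BS p) : ∀ k ≤ L p s, bit p s (p + k) = bit p s (p - k) := by
  have h0 : ∀ k ≤ 0, bit p s (p + k) = bit p s (p - k) := by
    intro k hk
    interval_cases k
    simp
  exact Nat.findGreatest_spec (P := fun j => ∀ k ≤ j, bit p s (p + k) = bit p s (p - k))
    (Nat.zero_le p) h0

lemma L_not_sym (s : BS p) (h : L p s < p) :
    bit p s (p + (L p s + 1)) ≠ bit p s (p - (L p s + 1)) := by
  have h1 : ¬ (∀ k ≤ L p s + 1, bit p s (p + k) = bit p s (p - k)) :=
    Nat.findGreatest_is_greatest (n := p) (lt_add_one (L p s)) (by omega)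
  intro hc
  apply h1
  intro k hk
  rcases Nat.lt_or_ge k (L p s + 1) with h' | h'
  · exact Psym_L s k (by omega)
  · have : k = L p s + 1 := by omega
    subst this; exact hc

lemma L_flipA (s : BS p) : L p (flipA s) = L p s := by
  unfold L
  apply findGreatest_congr'
  intro n
  constructor <;> intro h k hk <;> have h2 := h k hk
  · rw [bit_flipA, bit_flipA] at h2; exact add_right_cancel h2
  · rw [bit_flipA, bit_flipA, h2]

lemma sgn_flipA (s : BS p) : sgn p (flipA s) = sgn p s := by
  simp only [sgn, IsOdd, bit_flipA, ne_eq, add_left_inj]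

lemma B_flipA (β : Fin p → ℝ) (s : BS p) : B p β (flipA s) = B p β s := by
  unfold B
  refine Finset.prod_congr rfl fun j _ => ?_
  rw [bit_flipA, bit_flipA, bit_flipA, bit_flipA]
  simp

lemma bit_pflip (s : BS p) {m : ℕ} (h : m < 2*p+1) :
    bit p (pflip p s) m =
      if p - L p s ≤ m ∧ m ≤ p + L p s then bit p s m + 1 else bit p s m := by
  simp only [bit, pflip, Nat.mod_eq_of_lt h]

lemma L_pflip (s : BS p) : L p (pflip p s) = L p s := by
  have hle : L p s ≤ L p (pflip p s) := by
    apply Nat.le_findGreatest (L_le' s)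
    intro k hk
    have hk' : k ≤ p := le_trans hk (L_le' s)
    rw [bit_pflip s (by omega), bit_pflip s (by omega),
      if_pos (by omega), if_pos ⟨by omega, by omega⟩, Psym_L s k hk]
  rcases Nat.lt_or_ge (L p s) (L p (pflip p s)) with h | h
  · exfalso
    have hlp : L p s < p := lt_of_lt_of_le h (L_le' _)
    have h2 := Psym_L (pflip p s) (L p s + 1) (by omega)
    rw [bit_pflip s (by omega), bit_pflip s (by omega),
      if_neg (by omega), if_neg (by omega)] at h2
    exact L_not_sym s hlp h2
  · exact le_antisymm h hle

lemma phi_pflip (γ : Fin p → ℝ) (s t : BS p) (h : L p s ≤ L p t) :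
    phi p γ (pflip p s + t) = phi p γ (s + t) := by
  unfold phi
  refine Finset.sum_congr rfl fun j _ => ?_
  have hj : (j : ℕ) < p := j.2
  rcases Nat.lt_or_ge (j : ℕ) (p - L p s) with hc | hc
  · have hLp : L p s ≤ p := L_le' s
    rw [bit_add', bit_add', bit_add', bit_add',
      bit_pflip s (by omega), bit_pflip s (by omega),
      if_neg (by omega), if_neg (by omega)]
  · -- symmetric zone: both differences vanish
    have hkL : p - (j : ℕ) ≤ L p s := by omega
    have e1 : p + (p - (j : ℕ)) = 2*p - (j : ℕ) := by omega
    have e2 : p - (p - (j : ℕ)) = (j : ℕ) := by omega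
    have hs := Psym_L s (p - (j : ℕ)) hkL
    have ht := Psym_L t (p - (j : ℕ)) (le_trans hkL h)
    rw [e1, e2] at hs ht
    have hps : bit p (pflip p s) (2*p - (j : ℕ)) = bit p (pflip p s) (j : ℕ) := by
      rw [bit_pflip s (by omega), bit_pflip s (by omega),
        if_pos ⟨by omega, by omega⟩, if_pos ⟨by omega, by omega⟩, hs]
    rw [bit_add', bit_add', bit_add', bit_add', hps, hs, ht, sub_self, sub_self]

end Aux

lemma Rrec_def (p : ℕ) (d : ℝ) (β γ : Fin p → ℝ) (s : BS p) :
    Rrec p d β γ s =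
    Complex.exp (-(d : ℂ) * (1 - (1/2 : ℂ) *
        ∑ t ∈ Finset.univ.filter (fun t : BS p => L p t = p),
          sgn p t * B p β t * Complex.exp (Complex.I * (phi p γ (s + t) : ℝ)))) *
    (if L p s + 2 ≤ p then
      Complex.exp (((d : ℂ) / 2) *
        ∑ t ∈ (Finset.univ.filter (fun t : BS p => L p s < L p t ∧ L p t < p)).attach,
          sgn p t.1 * B p β t.1 * Rrec p d β γ t.1 *
            Complex.exp (Complex.I * (phi p γ (s + t.1) : ℝ)))
      else 1) := by
  rw [Rrec]

lemma Rrec_pflip (p : ℕ) (d : ℝ) (β γ : Fin p → ℝ) (s : BS p) :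
    Rrec p d β γ (pflip p s) = Rrec p d β γ s := by
  rw [Rrec_def p d β γ (pflip p s), Rrec_def p d β γ s, L_pflip]
  refine congrArg₂ (fun S T : ℂ => Complex.exp (-(d : ℂ) * (1 - (1/2 : ℂ) * S)) *
    (if L p s + 2 ≤ p then Complex.exp (((d : ℂ) / 2) * T) else 1)) ?_ ?_
  · refine Finset.sum_congr rfl fun t ht => ?_
    rw [phi_pflip γ s t (by rw [(Finset.mem_filter.mp ht).2]; exact L_le' s)]
  · refine Finset.sum_congr rfl fun t _ => ?_
    rw [phi_pflip γ s t.1 (le_of_lt (Finset.mem_filter.mp t.2).2.1)]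

def flipAE (p : ℕ) : BS p ≃ BS p := ⟨flipA, flipA, flipA_flipA, flipA_flipA⟩

lemma s_add_flipA (s t : BS p) : s + flipA t = flipA s + t := by
  conv_lhs => rw [← flipA_flipA s]
  rw [flipA_add_flipA]

lemma Rrec_flipA_body (p : ℕ) (d : ℝ) (β γ : Fin p → ℝ) (s : BS p)
    (IH : ∀ t : BS p, L p s < L p t → Rrec p d β γ (flipA t) = Rrec p d β γ t) :
    Rrec p d β γ (flipA s) = Rrec p d β γ s := by
  rw [Rrec_def p d β γ (flipA s), Rrec_def p d β γ s, L_flipA]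
  refine congrArg₂ (fun S T : ℂ => Complex.exp (-(d : ℂ) * (1 - (1/2 : ℂ) * S)) *
    (if L p s + 2 ≤ p then Complex.exp (((d : ℂ) / 2) * T) else 1)) ?_ ?_
  · refine Finset.sum_equiv (flipAE p) (fun t => ?_) (fun t ht => ?_)
    · simp [flipAE, L_flipA]
    · show _ = sgn p (flipA t) * B p β (flipA t) *
        Complex.exp (Complex.I * (phi p γ (s + flipA t) : ℝ))
      rw [sgn_flipA, B_flipA, s_add_flipA]
  · rw [Finset.sum_attach _ (fun t => sgn p t * B p β t * Rrec p d β γ t *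
          Complex.exp (Complex.I * (phi p γ (flipA s + t) : ℝ))),
        Finset.sum_attach _ (fun t => sgn p t * B p β t * Rrec p d β γ t *
          Complex.exp (Complex.I * (phi p γ (s + t) : ℝ)))]
    refine Finset.sum_equiv (flipAE p) (fun t => ?_) (fun t ht => ?_)
    · simp [flipAE, L_flipA]
    · show _ = sgn p (flipA t) * B p β (flipA t) * Rrec p d β γ (flipA t) *
        Complex.exp (Complex.I * (phi p γ (s + flipA t) : ℝ))
      have hmem := (Finset.mem_filter.mp ht).2.1
      rw [sgn_flipA, B_flipA, s_add_flipA, IH t hmem]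

lemma Rrec_flipA (p : ℕ) (d : ℝ) (β γ : Fin p → ℝ) :
    ∀ n (s : BS p), p - L p s ≤ n → Rrec p d β γ (flipA s) = Rrec p d β γ s := by
  intro n
  induction n with
  | zero =>
    intro s hs
    refine Rrec_flipA_body p d β γ s (fun t ht => absurd ht ?_)
    have := L_le' (p := p) t
    omega
  | succ n ih =>
    intro s hs
    refine Rrec_flipA_body p d β γ s (fun t ht => ih t ?_)
    omega

/-- symmetries of the `R_s`: invariance under partial flip and
under flipping every bit. -/
theorem stmt_13 (p : ℕ) (hp : 1 ≤ p) (d : ℝ) (hd : 0 < d) (β γ : Fin p → ℝ) (s : BS p) :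
    Rrec p d β γ (pflip p s) = Rrec p d β γ s ∧
    Rrec p d β γ (fun j => s j + 1) = Rrec p d β γ s := by
  exact ⟨Rrec_pflip p d β γ s, Rrec_flipA p d β γ (p - L p s) s le_rfl⟩

end QAOA
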